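/- Vanishing of odd-order terminating Kummer sums: for every natural number n and complex b with no denominator vanishing, ∑_{k=0}^{2n+1} ((-(2n+1))_k (b)_k)/(k! (-(2n+1)+1-b)_k) (-1)^k = 0; that is, the terminating 2F1 at -1 with upper parameters -(2n+1), b and lower parameter -2n-b vanishes. -/

import Mathlib

noncomputable def poch (z : ℂ) (k : ℕ) : ℂ := ∏ j ∈ Finset.range k, (z + j)

/-!
The coefficient `(-m)_k (-1)^k / k!` is the binomial coefficient `C(m, k)`, symmetric under
`k ↔ m - k`. The reflection formula `(z)_t = (-1)^t (1 - t - z)_t` gives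
`(b)_k (1-m-b)_{m-k} = (-1)^{m-k} (b)_m`, so for odd `m` the ratio `(b)_k / (1-m-b)_k` changes
sign under `k ↔ m - k`, and the terms of the sum cancel in pairs.
-/

open Finset

lemma poch_add (z : ℂ) (a c : ℕ) : poch z (a + c) = poch z a * poch (z + a) c := by
  simp only [poch, prod_range_add, Nat.cast_add, add_assoc]

lemma poch_reflect (z : ℂ) (t : ℕ) : poch z t = (-1) ^ t * poch (1 - t - z) t := by
  rw [poch, poch, ← prod_range_reflect, pow_eq_prod_const, ← prod_mul_distrib]
  refine prod_congr rfl fun j hj => ?_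
  rw [Nat.cast_sub (by simp at hj; omega), Nat.cast_sub (by simp at hj; omega)]
  push_cast
  ring

lemma poch_neg (z : ℂ) (k : ℕ) : poch (-z) k = (-1) ^ k * (descPochhammer ℂ k).eval z := by
  rw [poch, descPochhammer_eval_eq_prod_range, pow_eq_prod_const, ← prod_mul_distrib]
  exact prod_congr rfl fun j _ => by ring

lemma poch_neg_natCast (m k : ℕ) : poch (-(m : ℂ)) k = (-1) ^ k * k.factorial * m.choose k := by
  rw [poch_neg, descPochhammer_eval_eq_descFactorial, Nat.descFactorial_eq_factorial_mul_choose]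
  push_cast
  ring

lemma poch_mul_poch_one_sub_sub (b : ℂ) {m k : ℕ} (hk : k ≤ m) :
    poch b k * poch (1 - m - b) (m - k) = (-1) ^ (m - k) * poch b m := by
  have hb : 1 - ((m - k : ℕ) : ℂ) - (1 - m - b) = b + k := by push_cast [Nat.cast_sub hk]; ring
  rw [poch_reflect (1 - m - b), hb, mul_left_comm, ← poch_add, Nat.add_sub_cancel' hk]

lemma poch_div_poch_one_sub_sub_reflect_of_odd (b : ℂ) {m k : ℕ} (hm : Odd m) (hk : k ≤ m)
    (hden : poch (1 - m - b) k ≠ 0) (hden' : poch (1 - m - b) (m - k) ≠ 0) :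
    poch b (m - k) / poch (1 - m - b) (m - k) = -(poch b k / poch (1 - m - b) k) := by
  have h₁ := poch_mul_poch_one_sub_sub b hk
  have h₂ := poch_mul_poch_one_sub_sub b (Nat.sub_le m k)
  rw [Nat.sub_sub_self hk] at h₂
  have hsign : (-1 : ℂ) ^ k * (-1) ^ (m - k) = -1 := by
    rw [← pow_add, Nat.add_sub_cancel' hk, hm.neg_one_pow]
  have hsq : ((-1 : ℂ) ^ (m - k)) ^ 2 = 1 := by rw [← pow_mul, pow_mul', neg_one_sq, one_pow]
  rw [eq_neg_iff_add_eq_zero, div_add_div _ _ hden' hden, div_eq_zero_iff]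
  left
  linear_combination h₂ + h₁ - poch b m * (-1) ^ k * hsq + poch b m * (-1) ^ (m - k) * hsign

lemma kummer_term_eq (m k : ℕ) (b c : ℂ) :
    poch (-(m : ℂ)) k * poch b k / ((k.factorial : ℂ) * poch c k) * (-1) ^ k
      = m.choose k * (poch b k / poch c k) := by
  have hfact : (k.factorial : ℂ) ≠ 0 := Nat.cast_ne_zero.mpr k.factorial_ne_zero
  calc _ = ((-1) ^ k) ^ 2 * ((k.factorial : ℂ) / k.factorial)
          * (m.choose k * (poch b k / poch c k)) := by
        rw [poch_neg_natCast]; ring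
    _ = _ := by rw [← pow_mul, pow_mul', neg_one_sq, one_pow, div_self hfact, one_mul, one_mul]

theorem sum_kummer_odd_eq_zero {m : ℕ} (hm : Odd m) (b : ℂ)
    (hden : ∀ k ≤ m, poch (1 - m - b) k ≠ 0) :
    ∑ k ∈ range (m + 1), poch (-(m : ℂ)) k * poch b k
        / ((k.factorial : ℂ) * poch (1 - m - b) k) * (-1) ^ k = 0 := by
  simp_rw [kummer_term_eq]
  refine sum_involution (fun k _ => m - k) (fun k hk => ?_) (fun k _ _ => ?_)
    (fun k _ => mem_range.mpr (by omega)) (fun k hk => by simp at hk; omega)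
  · have hk : k ≤ m := Nat.lt_succ_iff.mp (mem_range.mp hk)
    rw [Nat.choose_symm hk, poch_div_poch_one_sub_sub_reflect_of_odd b hm hk (hden k hk)
      (hden _ (Nat.sub_le m k))]
    ring
  · obtain ⟨t, rfl⟩ := hm
    omega

/-- Odd-order terminating Kummer sums vanish: `F(-(2n+1), b, -2n-b; -1) = 0`. -/
theorem odd_kummer_vanishes (n : ℕ) (b : ℂ)
    (hden : ∀ k : ℕ, k ≤ 2 * n + 1 → poch (-(2 * n : ℂ) - b) k ≠ 0) :
    ∑ k ∈ Finset.range (2 * n + 2),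
        poch (-(2 * n + 1 : ℂ)) k * poch b k
          / ((k.factorial : ℂ) * poch (-(2 * n : ℂ) - b) k) * (-1 : ℂ) ^ k
      = 0 := by
  have hm : ((2 * n + 1 : ℕ) : ℂ) = 2 * n + 1 := by push_cast; ring
  have hc : 1 - ((2 * n + 1 : ℕ) : ℂ) - b = -(2 * n : ℂ) - b := by rw [hm]; ring
  have h := sum_kummer_odd_eq_zero (odd_two_mul_add_one n) b (by rwa [hc])
  rwa [hc, hm] at h
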